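/- arXiv:math/0511368 — 3 statements merged into one kernel-verified Lean document; each statement's English description precedes it below -/
import Mathlib

section
/- Let n ≥ 2 and β ∈ (0,1). There is a constant c > 0, depending only on n and β, with the following property: for every θ ∈ [0,2π), every γ with 0 < γ < β/4, and every point z = (s₁e^{iα₁},…,sₙe^{iαₙ}) ∈ ℂⁿ with ‖z‖ ≤ 1/2 and s_j ≥ β for every j = 1,…,n, the Lebesgue measure (on ℝ × ℂ^{n−1} ≅ ℝ^{2n−1}) of the preimage Ψ_θ^{−1}(∏_{j=1}^n W(s_j,α_j,γ)) is at most cγ^{2n−1}. -/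
open MeasureTheory Metric Complex Set

noncomputable section

/-- ℂⁿ, identified with ℝ^{2n} as a Euclidean space. -/
abbrev Cn (n : ℕ) := EuclideanSpace ℂ (Fin n)

instance (n : ℕ) : MeasurableSpace (Cn n) := borel _
instance (n : ℕ) : BorelSpace (Cn n) := ⟨rfl⟩

/-- The truncated wedge W(s,α,γ) ⊆ ℂ. -/
def wedge (s α γ : ℝ) : Set ℂ :=
  {z | ∃ ρ φ : ℝ, 0 ≤ ρ ∧ |ρ - s| ≤ γ ∧ |φ - α| ≤ γ ∧ z = ρ * Complex.exp (Complex.I * φ)}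

/-- The poly-wedge ∏_{j=1}^n W(s_j, α_j, γ) ⊆ ℂⁿ. -/
def polyWedge (n : ℕ) (s α : Fin n → ℝ) (γ : ℝ) : Set (Cn n) :=
  {z | ∀ j, z j ∈ wedge (s j) (α j) γ}

/-- The wedge condition for a measure μ on ℂⁿ with constants k, r₀. -/
def WedgeCondition (n : ℕ) (μ : Measure (Cn n)) (k r₀ : ℝ) : Prop :=
  ∀ (s α : Fin n → ℝ), (∀ j, 0 ≤ s j) → (∀ j, α j ∈ Set.Ico 0 (2 * Real.pi)) →
    ∀ γ : ℝ, 0 < γ → γ < r₀ →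
      μ (polyWedge n s α γ) ≤ ENNReal.ofReal (k * γ ^ (2 * n - 1))

/-- The constant c_{2n} = Γ(n-1)/(2π)ⁿ. -/
def newtonC (n : ℕ) : ℝ := Real.Gamma ((n : ℝ) - 1) / (2 * Real.pi) ^ n

/-- The Newtonian potential of μ on ℂⁿ ≅ ℝ^{2n}. -/
def newtonPot (n : ℕ) (μ : Measure (Cn n)) (w : Cn n) : ℝ :=
  ∫ ζ, newtonC n * ‖w - ζ‖ ^ ((2 : ℝ) - 2 * n) ∂μ

/-- The Newtonian potential of μ, as a `ℝ≥0∞`-valued integral. -/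
def newtonPotL (n : ℕ) (μ : Measure (Cn n)) (w : Cn n) : ENNReal :=
  ∫⁻ ζ, ENNReal.ofReal (newtonC n * ‖w - ζ‖ ^ ((2 : ℝ) - 2 * n)) ∂μ

/-- The point (s₁ e^{iα₁}, …, sₙ e^{iαₙ}) ∈ ℂⁿ. -/
def mkPt (n : ℕ) (s α : Fin n → ℝ) : Cn n :=
  (WithLp.equiv 2 (Fin n → ℂ)).symm (fun j => (s j : ℂ) * Complex.exp (Complex.I * α j))

/-- The map Φ(θ, r, w₂, …, wₙ) = (r/√(1+Σ|w_j|²))·(e^{iθ}, e^{iθ}w̄₂, …, e^{iθ}w̄ₙ). -/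
def Phi (n : ℕ) (θ r : ℝ) (w : Fin (n - 1) → ℂ) : Cn n :=
  (WithLp.equiv 2 (Fin n → ℂ)).symm (fun i =>
    ((r / Real.sqrt (1 + ∑ j, ‖w j‖ ^ 2) : ℝ) : ℂ) * Complex.exp (Complex.I * θ) *
      (if h : (i : ℕ) = 0 then 1
       else (starRingEnd ℂ) (w ⟨(i : ℕ) - 1, by have := i.isLt; omega⟩)))

/-- The Stoltz domain C_{θ,r}: convex hull of {θ} ∪ closedBall 0 r. -/
def stoltz (n : ℕ) (θ : Cn n) (r : ℝ) : Set (Cn n) :=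
  convexHull ℝ ({θ} ∪ closedBall 0 r)

/-- The Poisson kernel h_θ(w) = (1-‖w‖²)/‖θ-w‖^{2n} for the unit ball of ℂⁿ. -/
def poisson (n : ℕ) (θ w : Cn n) : ℝ :=
  (1 - ‖w‖ ^ 2) / ‖θ - w‖ ^ (2 * n)

/-- u : 𝔹 → ℝ is pluriharmonic if it is the real part of a holomorphic function on 𝔹. -/
def Pluriharmonic (n : ℕ) (u : Cn n → ℝ) : Prop :=
  ∃ f : Cn n → ℂ, DifferentiableOn ℂ f (ball 0 1) ∧ ∀ z ∈ ball (0 : Cn n) 1, u z = (f z).re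

end

/-! Each wedge `W(s, α, γ)` lies in the disc of radius `(1 + s) γ` about `s e^{iα}`, so
`u = Ψ_θ(r, w)` is coordinatewise within `2γ` of `z`. Since `‖Ψ_θ(r, w)‖ = r`, this pins `r` to
within `2nγ` of `‖z‖`; since `w̄ᵢ = uᵢ₊₁ / u₀` and `|z₀| ≥ β`, it pins `wᵢ` to within `4γ/β²` of
the conjugate of `zᵢ₊₁ / z₀`. So the preimage lies in a ball of radius `O(γ)` in `ℝ × ℂⁿ⁻¹`,
whose volume is `O(γ^{2n-1})`. -/

open scoped ComplexConjugate Real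

lemma norm_exp_I_mul_sub_exp_I_mul_le (φ α : ℝ) :
    ‖exp (I * φ) - exp (I * α)‖ ≤ |φ - α| := by
  have h : exp (I * φ) - exp (I * α) = exp (I * α) * (exp (I * ↑(φ - α)) - 1) := by
    rw [mul_sub, mul_one, ← Complex.exp_add]; push_cast; ring_nf
  rw [h, norm_mul, mul_comm I, Complex.norm_exp_ofReal_mul_I, one_mul, ← Real.norm_eq_abs]
  exact Real.norm_exp_I_mul_ofReal_sub_one_le

lemma wedge_subset_closedBall {s α γ : ℝ} (hs : 0 ≤ s) :
    wedge s α γ ⊆ closedBall (s * exp (I * α)) ((1 + s) * γ) := by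
  rintro _ ⟨ρ, φ, -, hρ, hφ, rfl⟩
  rw [mem_closedBall, dist_eq_norm]
  calc ‖(ρ : ℂ) * exp (I * φ) - s * exp (I * α)‖
      = ‖((ρ - s : ℝ) : ℂ) * exp (I * φ) + s * (exp (I * φ) - exp (I * α))‖ := by
        push_cast; ring_nf
    _ ≤ |ρ - s| + s * |φ - α| := by
        refine (norm_add_le _ _).trans (add_le_add ?_ ?_)
        · rw [norm_mul, mul_comm I, Complex.norm_exp_ofReal_mul_I, mul_one, Complex.norm_real,
            Real.norm_eq_abs]
        · rw [norm_mul, Complex.norm_real, Real.norm_of_nonneg hs]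
          exact mul_le_mul_of_nonneg_left (norm_exp_I_mul_sub_exp_I_mul_le φ α) hs
    _ ≤ (1 + s) * γ := by nlinarith

lemma norm_div_sub_div_le {𝕜 : Type*} [NormedField 𝕜] {a b c d : 𝕜} (hb : b ≠ 0) (hd : d ≠ 0) :
    ‖a / b - c / d‖ ≤ (‖a - c‖ * ‖d‖ + ‖c‖ * ‖d - b‖) / (‖b‖ * ‖d‖) := by
  rw [div_sub_div _ _ hb hd, norm_div, norm_mul,
    show a * d - b * c = (a - c) * d + c * (d - b) by ring]
  gcongr
  exact (norm_add_le _ _).trans_eq (by rw [norm_mul, norm_mul])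

lemma norm_div_sub_div_le_of_norm_sub_le {𝕜 : Type*} [NormedField 𝕜] {u₀ u₁ z₀ z₁ : 𝕜} {β δ : ℝ}
    (hβ : 0 < β) (hδ : 2 * δ ≤ β) (h₀ : ‖u₀ - z₀‖ ≤ δ) (h₁ : ‖u₁ - z₁‖ ≤ δ)
    (hz₀ : β ≤ ‖z₀‖) (hz : ‖z₀‖ + ‖z₁‖ ≤ 1) :
    ‖u₁ / u₀ - z₁ / z₀‖ ≤ 2 * δ / β ^ 2 := by
  have hu₀ : β / 2 ≤ ‖u₀‖ := by
    have := norm_sub_norm_le z₀ u₀; rw [norm_sub_rev] at this; linarith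
  have hδ0 : 0 ≤ δ := (norm_nonneg _).trans h₀
  refine (norm_div_sub_div_le (norm_pos_iff.mp (by linarith)) (norm_pos_iff.mp (by linarith))).trans ?_
  rw [norm_sub_rev z₀]
  calc (‖u₁ - z₁‖ * ‖z₀‖ + ‖z₁‖ * ‖u₀ - z₀‖) / (‖u₀‖ * ‖z₀‖)
      ≤ (δ * ‖z₀‖ + ‖z₁‖ * δ) / (β / 2 * β) := by gcongr
    _ ≤ δ / (β / 2 * β) := by gcongr; nlinarith
    _ = 2 * δ / β ^ 2 := by field_simp

lemma EuclideanSpace.norm_le_sum_norm_apply {𝕜 ι : Type*} [RCLike 𝕜] [Fintype ι]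
    (x : EuclideanSpace 𝕜 ι) : ‖x‖ ≤ ∑ i, ‖x i‖ := by
  rw [EuclideanSpace.norm_eq]
  refine Real.sqrt_le_iff.mpr ⟨by positivity, ?_⟩
  exact Finset.sum_sq_le_sq_sum_of_nonneg fun i _ => norm_nonneg _

lemma volume_closedBall_real_prod_complex_pi {ι : Type*} [Fintype ι] (p : ℝ × (ι → ℂ)) {R : ℝ}
    (hR : 0 ≤ R) :
    volume (closedBall p R) =
      ENNReal.ofReal (2 * Real.pi ^ Fintype.card ι * R ^ (2 * Fintype.card ι + 1)) := by
  rw [← closedBall_prod_same, closedBall_pi _ hR, Measure.volume_eq_prod, Measure.prod_prod,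
    Real.volume_closedBall, volume_pi_pi]
  simp only [Complex.volume_closedBall, Finset.prod_const, Finset.card_univ]
  rw [← ENNReal.ofReal_coe_nnreal, NNReal.coe_real_pi, ← ENNReal.ofReal_pow hR,
    ← ENNReal.ofReal_mul (by positivity), ← ENNReal.ofReal_pow (by positivity),
    ← ENNReal.ofReal_mul (by positivity)]
  congr 1
  ring

lemma norm_mkPt_apply {n : ℕ} {s α : Fin n → ℝ} {j : Fin n} (hs : 0 ≤ s j) :
    ‖mkPt n s α j‖ = s j := by
  simp [mkPt, mul_comm I, Complex.norm_exp_ofReal_mul_I, abs_of_nonneg hs]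

lemma norm_sub_mkPt_apply_le_of_mem_polyWedge {n : ℕ} {s α : Fin n → ℝ} {γ : ℝ} {u : Cn n}
    (hu : u ∈ polyWedge n s α γ) {j : Fin n} (hs : 0 ≤ s j) :
    ‖u j - mkPt n s α j‖ ≤ (1 + s j) * γ := by
  rw [← dist_eq_norm]
  exact wedge_subset_closedBall hs (hu j)

section Phi

variable {m : ℕ} {θ r : ℝ} {w : Fin m → ℂ}

lemma Phi_apply_zero :
    Phi (m + 1) θ r w 0 = ((r / √(1 + ∑ j, ‖w j‖ ^ 2) : ℝ) : ℂ) * exp (I * θ) := by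
  simp [Phi]

lemma Phi_apply_succ (i : Fin m) :
    Phi (m + 1) θ r w i.succ = Phi (m + 1) θ r w 0 * conj (w i) := by
  simp [Phi]

lemma Phi_apply_succ_div_apply_zero (hr : r ≠ 0) (i : Fin m) :
    Phi (m + 1) θ r w i.succ / Phi (m + 1) θ r w 0 = conj (w i) := by
  have hM : 0 < √(1 + ∑ j, ‖w j‖ ^ 2) := Real.sqrt_pos.mpr (by positivity)
  have h0 : Phi (m + 1) θ r w 0 ≠ 0 := by
    rw [Phi_apply_zero]
    exact mul_ne_zero (Complex.ofReal_ne_zero.mpr (div_ne_zero hr hM.ne')) (Complex.exp_ne_zero _)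
  rw [Phi_apply_succ, mul_div_cancel_left₀ _ h0]

lemma norm_Phi (hr : 0 ≤ r) : ‖Phi (m + 1) θ r w‖ = r := by
  have hM : 0 < 1 + ∑ j, ‖w j‖ ^ 2 := by positivity
  rw [EuclideanSpace.norm_eq, Fin.sum_univ_succ]
  simp only [Phi_apply_succ, Phi_apply_zero, norm_mul, Complex.norm_real, RCLike.norm_conj,
    mul_comm I, Complex.norm_exp_ofReal_mul_I, mul_one, Real.norm_eq_abs, mul_pow, sq_abs]
  rw [← Finset.mul_sum, ← mul_one_add, div_pow, Real.sq_sqrt hM.le,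
    div_mul_cancel₀ _ hM.ne', Real.sqrt_sq hr]

variable {z : Cn (m + 1)} {δ : ℝ}

lemma abs_sub_norm_le_of_norm_Phi_apply_sub_le (hr : 0 ≤ r)
    (h : ∀ j, ‖Phi (m + 1) θ r w j - z j‖ ≤ δ) : |r - ‖z‖| ≤ (m + 1) * δ := by
  rw [← norm_Phi (θ := θ) (w := w) hr]
  calc |‖Phi (m + 1) θ r w‖ - ‖z‖| ≤ ‖Phi (m + 1) θ r w - z‖ := abs_norm_sub_norm_le _ _
    _ ≤ ∑ j, ‖Phi (m + 1) θ r w j - z j‖ := EuclideanSpace.norm_le_sum_norm_apply _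
    _ ≤ ∑ _j : Fin (m + 1), δ := Finset.sum_le_sum fun j _ => h j
    _ = (m + 1) * δ := by simp

lemma norm_sub_conj_div_le_of_norm_Phi_apply_sub_le (hr : r ≠ 0) {β : ℝ} (hβ : 0 < β)
    (hδ : 2 * δ ≤ β) (h : ∀ j, ‖Phi (m + 1) θ r w j - z j‖ ≤ δ) (hz₀ : β ≤ ‖z 0‖)
    (hz : ∀ j, ‖z j‖ ≤ 1 / 2) (i : Fin m) :
    ‖w i - conj (z i.succ / z 0)‖ ≤ 2 * δ / β ^ 2 := by
  rw [← Complex.norm_conj, map_sub, Complex.conj_conj, ← Phi_apply_succ_div_apply_zero hr i]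
  exact norm_div_sub_div_le_of_norm_sub_le hβ hδ (h 0) (h i.succ) hz₀ (by linarith [hz 0, hz i.succ])

end Phi

lemma dist_le_of_Phi_mem_polyWedge {m : ℕ} {θ r β γ : ℝ} {s α : Fin (m + 1) → ℝ}
    {w : Fin m → ℂ} (hγ : 0 < γ) (hγβ : γ < β / 4) (hs : ∀ j, β ≤ s j)
    (hz : ‖mkPt (m + 1) s α‖ ≤ 1 / 2) (hr : 0 < r)
    (hw : Phi (m + 1) θ r w ∈ polyWedge (m + 1) s α γ) :
    dist (r, w) (‖mkPt (m + 1) s α‖,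
        fun i => conj (mkPt (m + 1) s α i.succ / mkPt (m + 1) s α 0)) ≤
      (2 * (m + 1) + 4 / β ^ 2) * γ := by
  set z := mkPt (m + 1) s α
  have hβ : 0 < β := by linarith
  have hzs (j : Fin (m + 1)) : ‖z j‖ = s j := norm_mkPt_apply (hβ.le.trans (hs j))
  have hz_le (j : Fin (m + 1)) : ‖z j‖ ≤ 1 / 2 := (PiLp.norm_apply_le z j).trans hz
  have hnear (j : Fin (m + 1)) : ‖Phi (m + 1) θ r w j - z j‖ ≤ 2 * γ :=
    (norm_sub_mkPt_apply_le_of_mem_polyWedge hw (hβ.le.trans (hs j))).trans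
      (by nlinarith [hzs j, hz_le j])
  have h₁ : 0 ≤ (m + 1) * γ := by positivity
  have h₂ : 0 ≤ 4 / β ^ 2 * γ := by positivity
  rw [Prod.dist_eq, max_le_iff, Real.dist_eq, dist_pi_le_iff (by positivity)]
  refine ⟨(abs_sub_norm_le_of_norm_Phi_apply_sub_le hr.le hnear).trans (by linarith), fun i => ?_⟩
  rw [dist_eq_norm]
  refine (norm_sub_conj_div_le_of_norm_Phi_apply_sub_le hr.ne' hβ (by linarith) hnear
    (hzs 0 ▸ hs 0) hz_le i).trans ?_
  rw [show 2 * (2 * γ) / β ^ 2 = 4 / β ^ 2 * γ by ring]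
  linarith

theorem stmt2_general (n : ℕ) (hn : 2 ≤ n) (β : ℝ) :
    ∃ c > 0, ∀ θ ∈ Set.Ico (0 : ℝ) (2 * Real.pi), ∀ γ : ℝ, 0 < γ → γ < β / 4 →
      ∀ s α : Fin n → ℝ, (∀ j, β ≤ s j) → (∀ j, α j ∈ Set.Ico (0 : ℝ) (2 * Real.pi)) →
        ‖mkPt n s α‖ ≤ 1 / 2 →
        volume {p : ℝ × (Fin (n - 1) → ℂ) | p.1 ∈ Set.Ioo (0 : ℝ) 1 ∧
            Phi n θ p.1 p.2 ∈ polyWedge n s α γ} ≤ ENNReal.ofReal (c * γ ^ (2 * n - 1)) := by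
  obtain ⟨m, rfl⟩ : ∃ m, n = m + 1 := ⟨n - 1, by omega⟩
  set C : ℝ := 2 * (m + 1) + 4 / β ^ 2
  refine ⟨2 * π ^ m * C ^ (2 * m + 1), by positivity, ?_⟩
  intro θ _ γ hγ hγβ s α hs _ hz
  set z := mkPt (m + 1) s α
  calc volume _ ≤ volume (closedBall (‖z‖, fun i : Fin m => conj (z i.succ / z 0)) (C * γ)) :=
        measure_mono fun p hp => dist_le_of_Phi_mem_polyWedge hγ hγβ hs hz hp.1.1 hp.2
    _ = ENNReal.ofReal (2 * π ^ m * (C * γ) ^ (2 * m + 1)) := by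
        rw [volume_closedBall_real_prod_complex_pi _ (by positivity), Fintype.card_fin]
    _ = _ := by
        rw [show 2 * (m + 1) - 1 = 2 * m + 1 by omega, mul_pow, ← mul_assoc]

theorem stmt2 (n : ℕ) (hn : 2 ≤ n) (β : ℝ) (hβ0 : 0 < β) (hβ1 : β < 1) :
    ∃ c > 0, ∀ θ ∈ Set.Ico (0 : ℝ) (2 * Real.pi), ∀ γ : ℝ, 0 < γ → γ < β / 4 →
      ∀ s α : Fin n → ℝ, (∀ j, β ≤ s j) → (∀ j, α j ∈ Set.Ico (0 : ℝ) (2 * Real.pi)) →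
        ‖mkPt n s α‖ ≤ 1 / 2 →
        volume {p : ℝ × (Fin (n - 1) → ℂ) | p.1 ∈ Set.Ioo (0 : ℝ) 1 ∧
            Phi n θ p.1 p.2 ∈ polyWedge n s α γ} ≤ ENNReal.ofReal (c * γ ^ (2 * n - 1)) :=
  stmt2_general n hn β
end

section
/- Let n ≥ 1, let θ be a point of the unit sphere ∂𝔹 of ℂⁿ, and let r ∈ (0,1). There exist s ∈ (0,1) and c₁ > 0, depending only on r and n, such that for every z ∈ C_{θ,r} and every w ∈ ℂⁿ with ‖w−z‖ ≤ (1−‖z‖)/8, one has w ∈ C_{θ,s} and ‖θ−w‖ ≤ c₁(1−‖z‖). -/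
open MeasureTheory Metric Complex Set

noncomputable section

open RealInnerProductSpace

lemma proj_sq_aux (n : ℕ) (θ x : Cn n) (hθ : ‖θ‖ = 1) (c : ℝ) :
    ‖x - c • θ‖^2 = (c - ⟪θ, x⟫)^2 + (‖x‖^2 - ⟪θ, x⟫^2) := by
  have h := norm_sub_sq_real x (c • θ)
  rw [real_inner_smul_right, norm_smul] at h
  rw [h, hθ, real_inner_comm]
  rw [Real.norm_eq_abs]
  ring_nf
  rw [_root_.sq_abs]

lemma mem_stoltz_aux (n : ℕ) (θ w : Cn n) (s t' : ℝ) (ht0 : 0 ≤ t') (ht1 : t' ≤ 1)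
    (h : ‖w - t' • θ‖ ≤ (1 - t') * s) : w ∈ stoltz n θ s := by
  rcases eq_or_lt_of_le ht1 with h1 | h1
  · have hw : w = θ := by
      have h0 : ‖w - t' • θ‖ ≤ 0 := by rw [← h1] at h; simpa using h
      have := norm_nonneg (w - t' • θ)
      have : w - t' • θ = 0 := by
        rw [← norm_eq_zero]; linarith
      have hw : w = t' • θ := by rwa [sub_eq_zero] at this
      rw [hw, h1, one_smul]
    rw [hw]
    exact subset_convexHull ℝ _ (mem_union_left _ rfl)
  · have hne : (1 - t') ≠ 0 := by linarith
    set v := (1 - t')⁻¹ • (w - t' • θ) with hv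
    have hvn : ‖v‖ ≤ s := by
      rw [hv, norm_smul, Real.norm_eq_abs, abs_inv, abs_of_pos (by linarith : (0:ℝ) < 1 - t')]
      rw [inv_mul_le_iff₀ (by linarith : (0:ℝ) < 1 - t')]
      linarith [h]
    have hwv : w = t' • θ + (1 - t') • v := by
      rw [hv, smul_inv_smul₀ hne]
      abel
    have hθm : θ ∈ stoltz n θ s := subset_convexHull ℝ _ (mem_union_left _ rfl)
    have hvm : v ∈ stoltz n θ s :=
      subset_convexHull ℝ _ (mem_union_right _ (mem_closedBall_zero_iff.2 hvn))
    rw [hwv]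
    exact (convex_convexHull ℝ _) hθm hvm ht0 (by linarith) (by ring)


set_option maxHeartbeats 1000000 in
theorem stmt9 (n : ℕ) (hn : 1 ≤ n) (r : ℝ) (hr0 : 0 < r) (hr1 : r < 1) :
    ∃ s ∈ Set.Ioo (0 : ℝ) 1, ∃ c₁ > (0 : ℝ), ∀ θ : Cn n, ‖θ‖ = 1 →
      ∀ z ∈ stoltz n θ r, ∀ w : Cn n, ‖w - z‖ ≤ (1 - ‖z‖) / 8 →
        w ∈ stoltz n θ s ∧ ‖θ - w‖ ≤ c₁ * (1 - ‖z‖) := by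
  have hr1' : (0:ℝ) < 1 - r := by linarith
  obtain ⟨K, hKdef⟩ : ∃ x : ℝ, x = (9*r+1)/(7*(1-r)) := ⟨_, rfl⟩
  have hK0 : 0 < K := by rw [hKdef]; exact div_pos (by linarith) (by linarith)
  obtain ⟨Q, hQdef⟩ : ∃ x : ℝ, x = Real.sqrt (K^2+1) := ⟨_, rfl⟩
  have hQpos : 0 < Q := by rw [hQdef]; exact Real.sqrt_pos.2 (by positivity)
  have hQ2 : Q^2 = K^2 + 1 := by rw [hQdef]; exact Real.sq_sqrt (by positivity)
  obtain ⟨s1, hs1def⟩ : ∃ x : ℝ, x = K / Q := ⟨_, rfl⟩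
  have hs1pos : 0 < s1 := by rw [hs1def]; exact div_pos hK0 hQpos
  have hs1lt : s1 < 1 := by
    rw [hs1def, div_lt_one hQpos]
    nlinarith only [hQ2, hQpos, hK0, sq_nonneg (Q - K), sq_nonneg (Q + K)]
  obtain ⟨M, hMdef⟩ : ∃ x : ℝ, x = r + (1+r)/8 + K*(9*r+1)/8 := ⟨_, rfl⟩
  have hM0 : 0 < M := by
    have h1 := mul_pos hK0 (show (0:ℝ) < 9*r+1 by linarith)
    rw [hMdef]; linarith only [h1, hr0]
  have h1M : (0:ℝ) < 1 + M := by linarith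
  obtain ⟨s2, hs2def⟩ : ∃ x : ℝ, x = 1 - (7/8)*(1-r)/(1+M) := ⟨_, rfl⟩
  have hfrac_pos : 0 < (7/8)*(1-r)/(1+M) :=
    div_pos (by linarith only [hr1'] : (0:ℝ) < 7/8*(1-r)) h1M
  have hfrac_lt : (7/8)*(1-r)/(1+M) < 1 := by
    rw [div_lt_one h1M]
    linarith only [hM0, hr0]
  have hs2pos : 0 < s2 := by rw [hs2def]; linarith only [hfrac_lt]
  have hs2lt : s2 < 1 := by rw [hs2def]; linarith only [hfrac_pos]
  have hc1pos : (0:ℝ) < (1+r)/(1-r)+1/8 := by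
    have := div_pos (show (0:ℝ) < 1+r by linarith) hr1'
    linarith
  refine ⟨max s1 s2, ⟨lt_of_lt_of_le hs1pos (le_max_left s1 s2), max_lt hs1lt hs2lt⟩,
    (1+r)/(1-r)+1/8, hc1pos, ?_⟩
  intro θ hθ z hz w hw
  rw [stoltz, Set.singleton_union,
      convexHull_insert ⟨0, mem_closedBall_self hr0.le⟩,
      (convex_closedBall (0 : Cn n) r).convexHull_eq] at hz
  rw [mem_convexJoin] at hz
  obtain ⟨θ', hθ', p, hp, hseg⟩ := hz
  rw [Set.mem_singleton_iff] at hθ'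
  rw [hθ'] at hseg
  clear hθ'
  simp only [segment, Set.mem_setOf_eq] at hseg
  obtain ⟨t, tb, ht0, htb0, htab, hzeq⟩ := hseg
  have htb : tb = 1 - t := by linarith
  subst htb
  have hpn : ‖p‖ ≤ r := mem_closedBall_zero_iff.1 hp
  have ht1 : t ≤ 1 := by linarith
  have hup : ‖(1-t) • p‖ ≤ (1-t)*r := by
    rw [norm_smul, Real.norm_of_nonneg (by linarith : (0:ℝ) ≤ 1 - t)]
    exact mul_le_mul_of_nonneg_left hpn (by linarith)
  have hzub : ‖z‖ ≤ t + (1-t)*r := by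
    calc ‖z‖ = ‖t • θ + (1-t) • p‖ := by rw [hzeq]
    _ ≤ ‖t • θ‖ + ‖(1-t) • p‖ := norm_add_le _ _
    _ ≤ t + (1-t)*r := by
        rw [norm_smul, Real.norm_of_nonneg ht0, hθ, mul_one]
        linarith only [hup]
  have hzlb : t - (1-t)*r ≤ ‖z‖ := by
    have h1 : t • θ = z - (1-t) • p := by rw [← hzeq]; abel
    have h2 : ‖t • θ‖ ≤ ‖z‖ + ‖(1-t) • p‖ := by rw [h1]; exact norm_sub_le _ _
    rw [norm_smul, Real.norm_of_nonneg ht0, hθ, mul_one] at h2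
    linarith only [h2, hup]
  have h1z0 : 0 ≤ 1 - ‖z‖ := by
    linarith only [mul_nonneg (sub_nonneg.2 ht1) hr1'.le, hzub]
  have h1zub : 1 - ‖z‖ ≤ (1-t)*(1+r) := by linarith only [hzlb]
  have h1zlb : (1-t)*(1-r) ≤ 1 - ‖z‖ := by linarith only [hzub]
  have hε : ‖w - z‖ ≤ (1-t)*(1+r)/8 := le_trans hw (by linarith only [h1zub])
  -- the common final bound
  have hfinal : ‖θ - w‖ ≤ ((1+r)/(1-r)+1/8) * (1-‖z‖) := by
    have h1 : ‖θ - z‖ ≤ (1-t)*(1+r) := by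
      have he : θ - z = (1-t) • θ - (1-t) • p := by
        rw [← hzeq]; module
      rw [he]
      calc ‖(1-t) • θ - (1-t) • p‖ ≤ ‖(1-t) • θ‖ + ‖(1-t) • p‖ := norm_sub_le _ _
      _ ≤ (1-t) + (1-t)*r := by
          rw [norm_smul, Real.norm_of_nonneg (by linarith : (0:ℝ) ≤ 1-t), hθ, mul_one]
          linarith only [hup]
      _ = (1-t)*(1+r) := by ring
    have h2 : ‖θ - w‖ ≤ ‖θ - z‖ + ‖w - z‖ := by
      have he : θ - w = (θ - z) - (w - z) := by abel
      rw [he]; exact norm_sub_le _ _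
    have h3 : (1-t)*(1+r) ≤ (1+r)/(1-r)*(1-‖z‖) := by
      rw [div_mul_eq_mul_div, le_div_iff₀ hr1']
      have h4 := mul_le_mul_of_nonneg_left h1zlb (show (0:ℝ) ≤ 1+r by linarith)
      linarith only [h4]
    linarith only [h1, h2, h3, hw]
  -- inner products
  obtain ⟨a, hadef⟩ : ∃ x : ℝ, x = ⟪θ, z⟫ := ⟨_, rfl⟩
  obtain ⟨b, hbdef⟩ : ∃ x : ℝ, x = ⟪θ, w⟫ := ⟨_, rfl⟩
  have ha : a = t + (1-t) * ⟪θ, p⟫ := by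
    rw [hadef, ← hzeq, inner_add_right, real_inner_smul_right, real_inner_smul_right,
        real_inner_self_eq_norm_sq, hθ]
    ring
  have hθp : |⟪θ, p⟫| ≤ r := by
    have h := abs_real_inner_le_norm θ p
    rw [hθ, one_mul] at h; linarith
  have halb : t - (1-t)*r ≤ a := by
    have h := mul_le_mul_of_nonneg_left (neg_le_of_abs_le hθp) (sub_nonneg.2 ht1)
    linarith only [ha, h]
  have hba : |b - a| ≤ ‖w - z‖ := by
    have h1 : b - a = ⟪θ, w - z⟫ := by rw [hbdef, hadef, inner_sub_right]
    rw [h1]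
    have h := abs_real_inner_le_norm θ (w - z)
    rwa [hθ, one_mul] at h
  have hwn : ‖w‖ ≤ ‖z‖ + (1-‖z‖)/8 := by
    have he : w = z + (w - z) := by abel
    have h := norm_add_le z (w - z)
    rw [← he] at h
    linarith only [h, hw]
  have hble : b ≤ ‖w‖ := by
    rw [hbdef]
    have h := real_inner_le_norm θ w; rwa [hθ, one_mul] at h
  have h1b : (7/8)*(1-‖z‖) ≤ 1 - b := by linarith only [hble, hwn]
  obtain ⟨d, hddef⟩ : ∃ x : ℝ, x = ‖w - b • θ‖ := ⟨_, rfl⟩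
  have hd0 : 0 ≤ d := hddef ▸ norm_nonneg _
  have hproj : ∀ c : ℝ, ‖w - c • θ‖^2 = (c - b)^2 + d^2 := by
    intro c
    have h1 := proj_sq_aux n θ w hθ c
    have h2 := proj_sq_aux n θ w hθ b
    rw [hddef, h1, h2, hbdef]
    ring
  have hdle : d ≤ (1-t)*(9*r+1)/8 := by
    have h1 : d ≤ ‖w - t • θ‖ := by
      have h2 := hproj t
      nlinarith only [h2, norm_nonneg (w - t • θ), hd0, sq_nonneg (t - b)]
    have h3 : ‖w - t • θ‖ ≤ ‖w - z‖ + ‖z - t • θ‖ := by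
      have he : w - t • θ = (w - z) + (z - t • θ) := by abel
      rw [he]; exact norm_add_le _ _
    have h4 : ‖z - t • θ‖ ≤ (1-t)*r := by
      have he : z - t • θ = (1-t) • p := by rw [← hzeq]; abel
      rw [he]; exact hup
    linarith only [h1, h3, h4, hε]
  have hK7 : K * (7*(1-r)) = 9*r+1 := by
    rw [hKdef]; field_simp
  have hKd : d ≤ K * (1-b) := by
    have e0 : (7/8)*((1-t)*(1-r)) ≤ 1 - b := by linarith only [h1b, h1zlb]
    have e1 : K*((7/8)*((1-t)*(1-r))) ≤ K*(1-b) := mul_le_mul_of_nonneg_left e0 hK0.le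
    have e2 : K*((7/8)*((1-t)*(1-r))) = (1-t)*(9*r+1)/8 := by
      linear_combination ((1-t)/8) * hK7
    linarith only [e1, e2, hdle]
  by_cases hcase : 0 ≤ b - K*d
  · -- Case A
    obtain ⟨t', ht'def⟩ : ∃ x : ℝ, x = b - K*d := ⟨_, rfl⟩
    have ht'0 : 0 ≤ t' := ht'def ▸ hcase
    have hwle1 : ‖w‖ ≤ 1 := by linarith only [hwn, h1z0]
    have ht'le1 : t' ≤ 1 := by
      rw [ht'def]
      linarith only [mul_nonneg hK0.le hd0, hble, hwle1]
    have h1t' : (1+K^2)*d ≤ (1-t')*K := by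
      rw [ht'def]; nlinarith only [hKd, hK0, hd0]
    have hN2 : ‖w - t' • θ‖^2 = (K^2+1)*d^2 := by
      rw [hproj t', ht'def]; ring
    have hNeq : ‖w - t' • θ‖ = Q * d := by
      have h1 : ‖w - t' • θ‖ = Real.sqrt (‖w - t' • θ‖^2) := (Real.sqrt_sq (norm_nonneg _)).symm
      rw [h1, hN2, ← hQ2, ← mul_pow]
      exact Real.sqrt_sq (by positivity)
    have hkey : ‖w - t' • θ‖ ≤ (1 - t') * s1 := by
      rw [hNeq, hs1def]
      have h5 : Q^2*d = (K^2+1)*d := by rw [hQ2]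
      have h6 : Q*d*Q ≤ (1-t')*K := by
        have h7 : Q*d*Q = Q^2*d := by ring
        rw [h7, h5]; linarith only [h1t']
      calc Q*d = (Q*d*Q)/Q := by
            rw [mul_div_assoc, div_self hQpos.ne', mul_one]
      _ ≤ ((1-t')*K)/Q := by gcongr
      _ = (1-t')*(K/Q) := by ring
    have hkey2 : ‖w - t' • θ‖ ≤ (1-t') * max s1 s2 :=
      le_trans hkey (mul_le_mul_of_nonneg_left (le_max_left s1 s2) (by linarith only [ht'le1]))
    exact ⟨mem_stoltz_aux n θ w _ t' ht'0 ht'le1 hkey2, hfinal⟩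
  · -- Case B
    push_neg at hcase
    have htM' : t ≤ (1-t)*(r + (1+r)/8 + K*(9*r+1)/8) := by
      have hba' := neg_le_of_abs_le hba
      have hKd8 : K * d ≤ K * ((1-t)*(9*r+1)/8) := mul_le_mul_of_nonneg_left hdle hK0.le
      nlinarith only [hba', halb, hε, hcase, hKd8]
    have htM : t ≤ (1-t)*M := by rw [hMdef]; exact htM'
    have h1t : 1 ≤ (1-t)*(1+M) := by nlinarith only [htM]
    have hws2 : ‖w‖ ≤ s2 := by
      rw [hs2def]
      have h6 : (7/8)*(1-r)/(1+M) ≤ (7/8)*((1-t)*(1-r)) := by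
        rw [div_le_iff₀ h1M]
        have h7 := mul_le_mul_of_nonneg_left h1t (show (0:ℝ) ≤ (7/8)*(1-r) by linarith only [hr1'])
        nlinarith only [h7]
      linarith only [h6, hwn, h1zlb]
    have hmem : w ∈ stoltz n θ (max s1 s2) :=
      subset_convexHull ℝ _ (mem_union_right _
        (mem_closedBall_zero_iff.2 (le_trans hws2 (le_max_right s1 s2))))
    exact ⟨hmem, hfinal⟩


end
end

section
/- Let n ≥ 1 and r ∈ (0,1). There is a constant c > 0 depending only on n and r such that for every θ ∈ ∂𝔹, every z ∈ C_{θ,r} with ‖z‖ < 1, and every w ∈ ℂⁿ with ‖w‖ = ‖z‖ and ‖w−z‖ ≤ (1−‖z‖)/8, the Poisson kernel satisfies h_θ(w) ≥ c(1−‖z‖)^{1−2n}. -/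
open MeasureTheory Metric Complex Set

noncomputable section


theorem stoltz_dist (n : ℕ) (r : ℝ) (hr0 : 0 < r) (hr1 : r < 1) (θ : Cn n) (hθ : ‖θ‖ = 1)
    (z : Cn n) (hz : z ∈ stoltz n θ r) :
    ‖θ - z‖ ≤ (1 + r) / (1 - r) * (1 - ‖z‖) := by
  rw [stoltz, Set.singleton_union,
    convexHull_insert ⟨0, mem_closedBall_self hr0.le⟩,
    (convex_closedBall (0:Cn n) r).convexHull_eq] at hz
  simp only [mem_convexJoin, Set.mem_singleton_iff, segment, Set.mem_setOf_eq] at hz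
  obtain ⟨x, hxθ, y, hy, a, b, ha, hb, hab, hz⟩ := hz
  rw [hxθ] at hz
  have hy' : ‖y‖ ≤ r := by simpa using hy
  have ha' : a = 1 - b := by linarith
  have h1 : ‖θ - z‖ ≤ b * (1 + r) := by
    have he : θ - z = b • (θ - y) := by rw [← hz, ha']; module
    rw [he, norm_smul, Real.norm_eq_abs, _root_.abs_of_nonneg hb]
    have : ‖θ - y‖ ≤ 1 + r := by
      calc ‖θ - y‖ ≤ ‖θ‖ + ‖y‖ := norm_sub_le _ _
        _ ≤ 1 + r := by rw [hθ]; linarith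
    nlinarith
  have h2 : b * (1 - r) ≤ 1 - ‖z‖ := by
    have : ‖z‖ ≤ a + b * r := by
      calc ‖z‖ = ‖a • θ + b • y‖ := by rw [hz]
        _ ≤ ‖a • θ‖ + ‖b • y‖ := norm_add_le _ _
        _ ≤ a + b * r := by
            rw [norm_smul, norm_smul, Real.norm_eq_abs, Real.norm_eq_abs,
              _root_.abs_of_nonneg ha, _root_.abs_of_nonneg hb, hθ, mul_one]
            nlinarith
    linarith
  rw [div_mul_eq_mul_div, le_div_iff₀ (by linarith)]
  nlinarith

theorem stmt11 (n : ℕ) (hn : 1 ≤ n) (r : ℝ) (hr0 : 0 < r) (hr1 : r < 1) :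
    ∃ c > (0 : ℝ), ∀ θ : Cn n, ‖θ‖ = 1 → ∀ z ∈ stoltz n θ r, ‖z‖ < 1 →
      ∀ w : Cn n, ‖w‖ = ‖z‖ → ‖w - z‖ ≤ (1 - ‖z‖) / 8 →
        c * (1 - ‖z‖) ^ ((1 : ℝ) - 2 * n) ≤ poisson n θ w := by
  set K : ℝ := (1 + r) / (1 - r) + 1 / 8 with hK
  have hKpos : 0 < K := by
    have : 0 < (1 + r) / (1 - r) := div_pos (by linarith) (by linarith)
    rw [hK]; linarith
  refine ⟨(K ^ (2 * n))⁻¹, inv_pos.2 (pow_pos hKpos _), ?_⟩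
  intro θ hθ z hz hz1 w hwz hw
  set d : ℝ := 1 - ‖z‖ with hd
  have hdpos : 0 < d := by rw [hd]; linarith
  have h1 : ‖θ - w‖ ≤ K * d := by
    calc ‖θ - w‖ = ‖(θ - z) + (z - w)‖ := by rw [sub_add_sub_cancel]
      _ ≤ ‖θ - z‖ + ‖z - w‖ := norm_add_le _ _
      _ ≤ (1 + r) / (1 - r) * d + d / 8 := by
          have := stoltz_dist n r hr0 hr1 θ hθ z hz
          rw [norm_sub_rev z w]
          exact add_le_add this hw
      _ = K * d := by rw [hK]; ring
  have hwlt : ‖w‖ < 1 := by rw [hwz]; exact hz1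
  have h2 : (0:ℝ) < ‖θ - w‖ := by
    rw [norm_sub_pos_iff]
    intro h
    rw [h] at hθ
    linarith
  have hnum : d ≤ 1 - ‖w‖ ^ 2 := by
    have h0 : 0 ≤ ‖w‖ := norm_nonneg _
    rw [hd, ← hwz]; nlinarith
  have hrpow : (1 - ‖z‖) ^ ((1 : ℝ) - 2 * n) = d / d ^ (2 * n) := by
    rw [← hd, show ((1:ℝ) - 2 * n) = 1 - ((2 * n : ℕ) : ℝ) by push_cast; ring,
      Real.rpow_sub hdpos, Real.rpow_one, Real.rpow_natCast, div_eq_mul_inv, ← div_eq_mul_inv]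
  rw [hrpow, poisson]
  have e : (K ^ (2 * n))⁻¹ * (d / d ^ (2 * n)) = d / (K ^ (2 * n) * d ^ (2 * n)) := by
    field_simp
  rw [e]
  have hpow : ‖θ - w‖ ^ (2 * n) ≤ K ^ (2 * n) * d ^ (2 * n) := by
    rw [← mul_pow]
    exact pow_le_pow_left₀ (norm_nonneg _) h1 _
  calc d / (K ^ (2 * n) * d ^ (2 * n)) ≤ d / ‖θ - w‖ ^ (2 * n) := by
        apply div_le_div_of_nonneg_left hdpos.le (by positivity) hpow
    _ ≤ (1 - ‖w‖ ^ 2) / ‖θ - w‖ ^ (2 * n) := by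
        gcongr


end
end
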